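/- If ρ is proper, convex, and lower semicontinuous, then 𝒟 is nonempty and for every X ∈ 𝒳 one has ρ(X) = sup over ψ ∈ 𝒟 of (σ_𝒜(ψ) + σ_{𝒫,V₀,V₁}(ψ) − ψ(X)). -/

import Mathlib

open Topology Filter Set Pointwise

noncomputable section

/-- The asymptotic cone `C^∞` of a set `C` in a real topological vector space: the set of all
limits `z` of nets `l_α • c_α` with `c_α ∈ C`, `l_α ≥ 0`, `l_α → 0`, expressed via the standard
neighborhood characterization of net convergence. -/
def asymCone {E : Type*} [AddCommMonoid E] [SMul ℝ E] [TopologicalSpace E] (C : Set E) :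
    Set E :=
  {z | ∀ U ∈ 𝓝 z, ∀ ε : ℝ, 0 < ε → ∃ c ∈ C, ∃ l : ℝ, 0 ≤ l ∧ l < ε ∧ l • c ∈ U}

/-- Epigraph of a real-valued function. -/
def epigraph {E : Type*} (f : E → ℝ) : Set (E × ℝ) := {p | f p.1 ≤ p.2}

/-- The risk measure `ρ` associated to `(A, P, V₀, V₁)`, valued in the extended reals
(`sInf ∅ = ⊤`). -/
def riskM {X : Type*} [AddCommMonoid X] {N : ℕ} (A : Set X) (P : Set (Fin N → ℝ))
    (V₀ : (Fin N → ℝ) → ℝ) (V₁ : (Fin N → ℝ) → X) (Z : X) : EReal :=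
  sInf ((fun x => ((V₀ x : ℝ) : EReal)) '' {x | x ∈ P ∧ Z + V₁ x ∈ A})

/-- The set `ℒ = {x ∈ 𝒫^∞ : V₀^∞(x) ≤ 0, V₁(x) ∈ 𝒜^∞}`.  Here `V₀^∞(x) ≤ 0` is expressed as
`(x, 0)` belonging to the asymptotic cone of the epigraph of `V₀`, which is by definition the
epigraph of `V₀^∞`. -/
def Lset {X : Type*} [AddCommMonoid X] [SMul ℝ X] [TopologicalSpace X] {N : ℕ}
    (A : Set X) (P : Set (Fin N → ℝ)) (V₀ : (Fin N → ℝ) → ℝ) (V₁ : (Fin N → ℝ) → X) :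
    Set (Fin N → ℝ) :=
  {x | x ∈ asymCone P ∧ (x, (0 : ℝ)) ∈ asymCone (epigraph V₀) ∧ V₁ x ∈ asymCone A}

/-- Upper semicontinuity of the liquidation rule `V₁` relative to the ordering cone `Xp`:
for every `x` and every neighborhood `U` of `V₁ x` there is a neighborhood `W` of `x` with
`V₁(W) ⊆ U - Xp`. -/
def USCV1 {X : Type*} [AddCommGroup X] [TopologicalSpace X] {N : ℕ}
    (Xp : Set X) (V₁ : (Fin N → ℝ) → X) : Prop :=
  ∀ x : Fin N → ℝ, ∀ U ∈ 𝓝 (V₁ x), ∃ W ∈ 𝓝 x, ∀ y ∈ W, ∃ u ∈ U, ∃ p ∈ Xp, V₁ y = u - p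

/-- The support function `σ_𝒜(ψ) = inf {ψ(Z) : Z ∈ 𝒜}`. -/
def sigmaA {X : Type*} [AddCommGroup X] [Module ℝ X] [TopologicalSpace X] (A : Set X)
    (ψ : X →L[ℝ] ℝ) : EReal :=
  sInf ((fun Z => ((ψ Z : ℝ) : EReal)) '' A)

/-- The market support function `σ_{𝒫,V₀,V₁}(ψ) = inf {V₀(x) - ψ(V₁(x)) : x ∈ 𝒫}`. -/
def sigmaPV {X : Type*} [AddCommGroup X] [Module ℝ X] [TopologicalSpace X] {N : ℕ}
    (P : Set (Fin N → ℝ)) (V₀ : (Fin N → ℝ) → ℝ) (V₁ : (Fin N → ℝ) → X)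
    (ψ : X →L[ℝ] ℝ) : EReal :=
  sInf ((fun x => ((V₀ x - ψ (V₁ x) : ℝ) : EReal)) '' P)

/-- The dual set `𝒟 = {ψ ∈ 𝒳' : σ_𝒜(ψ) > -∞, σ_{𝒫,V₀,V₁}(ψ) > -∞}`. -/
def dualD {X : Type*} [AddCommGroup X] [Module ℝ X] [TopologicalSpace X] {N : ℕ}
    (A : Set X) (P : Set (Fin N → ℝ)) (V₀ : (Fin N → ℝ) → ℝ) (V₁ : (Fin N → ℝ) → X) :
    Set (X →L[ℝ] ℝ) :=
  {ψ | sigmaA A ψ ≠ ⊥ ∧ sigmaPV P V₀ V₁ ψ ≠ ⊥}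

/-!
A proper, convex, lower semicontinuous `ρ` has a closed convex epigraph in `𝒳 × ℝ`, so by
Hahn–Banach every value `ρ(Z)` is the supremum of `χ(Z) - v` over the continuous affine minorants
`χ - v` of `ρ`. Since `ρ(W - V₁(x)) ≤ V₀(x)` for `W ∈ 𝒜`, `x ∈ 𝒫`, such a minorant satisfies
`-v ≤ ψ(W) + V₀(x) - ψ(V₁(x))` with `ψ = -χ`; taking infima gives `-v ≤ σ_𝒜(ψ) + σ_{𝒫,V₀,V₁}(ψ)`,
so `ψ ∈ 𝒟` and `χ(Z) - v ≤ σ_𝒜(ψ) + σ_{𝒫,V₀,V₁}(ψ) - ψ(Z)`. The reverse inequality holds for every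
`ψ`, because `ψ(Z + V₁(x)) ≥ σ_𝒜(ψ)` whenever `x` is admissible for `Z`.
-/

section AffineMinorant

variable {X : Type*} {f : X → EReal}

lemma LowerSemicontinuous.isClosed_realEpigraph [TopologicalSpace X]
    (hf : LowerSemicontinuous f) : IsClosed {p : X × ℝ | f p.1 ≤ p.2} :=
  hf.isClosed_epigraph.preimage (continuous_id.prodMap continuous_coe_real_ereal)

variable [AddCommGroup X] [Module ℝ X]

lemma convex_epigraph_of_le_combination
    (hf : ∀ l : ℝ, 0 ≤ l → l ≤ 1 → ∀ Z W : X,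
      f (l • Z + (1 - l) • W) ≤ (l : EReal) * f Z + ((1 - l : ℝ) : EReal) * f W) :
    Convex ℝ {p : X × ℝ | f p.1 ≤ p.2} := by
  rintro ⟨z, s⟩ hz ⟨w, t⟩ hw l m hl hm hlm
  obtain rfl : m = 1 - l := by linarith
  calc f (l • z + (1 - l) • w)
      ≤ (l : EReal) * f z + ((1 - l : ℝ) : EReal) * f w := hf l hl (by linarith) z w
    _ ≤ (l : EReal) * s + ((1 - l : ℝ) : EReal) * t :=
        add_le_add (mul_le_mul_of_nonneg_left hz (EReal.coe_nonneg.mpr hl))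
          (mul_le_mul_of_nonneg_left hw (EReal.coe_nonneg.mpr hm))
    _ = ((l * s + (1 - l) * t : ℝ) : EReal) := by norm_cast

variable [TopologicalSpace X]

/-- The epigraph form of `χ x - v ≤ f x`, which avoids extended-real arithmetic. -/
def IsAffineMinorant (f : X → EReal) (χ : X →L[ℝ] ℝ) (v : ℝ) : Prop :=
  ∀ x (s : ℝ), f x ≤ s → χ x - v ≤ s

lemma exists_affineMinorant_of_slope_neg {φ : X →L[ℝ] ℝ} {α u r : ℝ} {Z : X} (hα : α < 0)
    (hsep : ∀ x (s : ℝ), f x ≤ s → φ x + s * α < u) (hZ : u < φ Z + r * α) :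
    ∃ χ v, IsAffineMinorant f χ v ∧ r < χ Z - v := by
  have hβ : 0 < -α := neg_pos.mpr hα
  refine ⟨(-α)⁻¹ • φ, (-α)⁻¹ * u, fun x s hxs => ?_, ?_⟩
  · have h := hsep x s hxs
    rw [smul_apply, smul_eq_mul, ← mul_sub, inv_mul_le_iff₀ hβ]
    linarith
  · rw [smul_apply, smul_eq_mul, ← mul_sub, lt_inv_mul_iff₀ hβ]
    linarith

/-- A vertical separating hyperplane is tilted by adding it, with a large weight, to a given
minorant. -/
lemma exists_affineMinorant_of_vertical {χ₁ φ : X →L[ℝ] ℝ} {v₁ u : ℝ} {Z : X}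
    (hmin : IsAffineMinorant f χ₁ v₁) (hsep : ∀ x (s : ℝ), f x ≤ s → φ x < u) (hZ : u < φ Z)
    (r : ℝ) : ∃ χ v, IsAffineMinorant f χ v ∧ r < χ Z - v := by
  have hlim : Tendsto (fun k : ℝ => χ₁ Z - v₁ + k * (φ Z - u)) atTop atTop :=
    tendsto_atTop_add_const_left _ _ (tendsto_id.atTop_mul_const (sub_pos.mpr hZ))
  obtain ⟨k, hkr, hk⟩ := ((hlim.eventually_gt_atTop r).and (eventually_ge_atTop 0)).exists
  refine ⟨χ₁ + k • φ, v₁ + k * u, fun x s hxs => ?_, ?_⟩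
  · have h := mul_le_mul_of_nonneg_left (hsep x s hxs).le hk
    have := hmin x s hxs
    simp only [add_apply, smul_apply, smul_eq_mul]
    linarith
  · simp only [add_apply, smul_apply, smul_eq_mul]
    linarith

lemma slope_nonpos {φ : X →L[ℝ] ℝ} {α u : ℝ} {Z₁ : X} (hZ₁ : f Z₁ ≠ ⊤)
    (hsep : ∀ x (s : ℝ), f x ≤ s → φ x + s * α < u) : α ≤ 0 := by
  by_contra! hα
  obtain ⟨c, hc, -⟩ := EReal.exists_between_coe_real (lt_top_iff_ne_top.mpr hZ₁)
  have hlim : Tendsto (fun s : ℝ => φ Z₁ + s * α) atTop atTop :=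
    tendsto_atTop_add_const_left _ _ (tendsto_id.atTop_mul_const hα)
  obtain ⟨s, hsu, hcs⟩ := ((hlim.eventually_ge_atTop u).and (eventually_ge_atTop c)).exists
  exact (hsep Z₁ s (hc.le.trans (EReal.coe_le_coe_iff.mpr hcs))).not_ge hsu

variable [IsTopologicalAddGroup X] [ContinuousSMul ℝ X] [LocallyConvexSpace ℝ X]

lemma exists_separation_realEpigraph (hf : LowerSemicontinuous f)
    (hcv : Convex ℝ {p : X × ℝ | f p.1 ≤ p.2}) {Z : X} {r : ℝ} (hr : (r : EReal) < f Z) :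
    ∃ (φ : X →L[ℝ] ℝ) (α u : ℝ),
      (∀ x (s : ℝ), f x ≤ s → φ x + s * α < u) ∧ u < φ Z + r * α := by
  obtain ⟨L, u, hL, hLZ⟩ :=
    geometric_hahn_banach_closed_point (x := (Z, r)) hcv hf.isClosed_realEpigraph (not_le.mpr hr)
  have hsplit : ∀ (x : X) (s : ℝ), L (x, s) = L (x, 0) + s * L (0, 1) := fun x s => by
    rw [← smul_eq_mul, ← map_smul, ← map_add]
    simp
  refine ⟨L.comp (ContinuousLinearMap.inl ℝ X ℝ), L (0, 1), u, fun x s hxs => ?_, ?_⟩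
  · simpa [hsplit x s] using hL (x, s) hxs
  · simpa [hsplit Z r] using hLZ

lemma exists_affineMinorant_gt_of_ne_top (hf : LowerSemicontinuous f)
    (hcv : Convex ℝ {p : X × ℝ | f p.1 ≤ p.2}) {Z : X} (hZ : f Z ≠ ⊤) {r : ℝ}
    (hr : (r : EReal) < f Z) : ∃ χ v, IsAffineMinorant f χ v ∧ r < χ Z - v := by
  obtain ⟨φ, α, u, hsep, hZu⟩ := exists_separation_realEpigraph hf hcv hr
  obtain ⟨t, ht, -⟩ := EReal.exists_between_coe_real (lt_top_iff_ne_top.mpr hZ)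
  have hrt : r < t := EReal.coe_lt_coe_iff.mp (hr.trans ht)
  have hZt := hsep Z t ht.le
  have hα : α < 0 := by nlinarith
  exact exists_affineMinorant_of_slope_neg hα hsep hZu

theorem exists_affineMinorant_gt (hf : LowerSemicontinuous f)
    (hcv : Convex ℝ {p : X × ℝ | f p.1 ≤ p.2}) {Z₁ : X} (hZ₁top : f Z₁ ≠ ⊤) (hZ₁bot : f Z₁ ≠ ⊥)
    {Z : X} {r : ℝ} (hr : (r : EReal) < f Z) :
    ∃ χ v, IsAffineMinorant f χ v ∧ r < χ Z - v := by
  obtain ⟨φ, α, u, hsep, hZu⟩ := exists_separation_realEpigraph hf hcv hr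
  rcases (slope_nonpos hZ₁top hsep).lt_or_eq with hα | rfl
  · exact exists_affineMinorant_of_slope_neg hα hsep hZu
  · obtain ⟨r₁, -, hr₁⟩ := EReal.exists_between_coe_real (bot_lt_iff_ne_bot.mpr hZ₁bot)
    obtain ⟨χ₁, v₁, hmin, -⟩ := exists_affineMinorant_gt_of_ne_top hf hcv hZ₁top hr₁
    simp only [mul_zero, add_zero] at hsep hZu
    exact exists_affineMinorant_of_vertical hmin hsep hZu r

end AffineMinorant

lemma EReal.le_sInf_add_sInf {α β : Type*} {s : Set α} {t : Set β} (hs : s.Nonempty)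
    (ht : t.Nonempty) {f : α → ℝ} {g : β → ℝ} {c : EReal}
    (h : ∀ a ∈ s, ∀ b ∈ t, c ≤ f a + g b) :
    c ≤ sInf ((fun a => (f a : EReal)) '' s) + sInf ((fun b => (g b : EReal)) '' t) := by
  obtain ⟨a₀, ha₀⟩ := hs
  obtain ⟨b₀, hb₀⟩ := ht
  have hs_top : sInf ((fun a => (f a : EReal)) '' s) ≠ ⊤ :=
    ne_top_of_le_ne_top (EReal.coe_ne_top (f a₀)) (sInf_le (mem_image_of_mem _ ha₀))
  have ht_top : sInf ((fun b => (g b : EReal)) '' t) ≠ ⊤ :=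
    ne_top_of_le_ne_top (EReal.coe_ne_top (g b₀)) (sInf_le (mem_image_of_mem _ hb₀))
  refine EReal.le_add_of_forall_gt (.inr ht_top) (.inl hs_top) fun a' ha' b' hb' => ?_
  obtain ⟨_, ⟨a, ha, rfl⟩, ha'⟩ := sInf_lt_iff.mp ha'
  obtain ⟨_, ⟨b, hb, rfl⟩, hb'⟩ := sInf_lt_iff.mp hb'
  exact (h a ha b hb).trans (add_le_add ha'.le hb'.le)

section RiskMeasure

variable {X : Type*} {N : ℕ} {A : Set X} {P : Set (Fin N → ℝ)} {V₀ : (Fin N → ℝ) → ℝ}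
  {V₁ : (Fin N → ℝ) → X}

section AddCommMonoid

variable [AddCommMonoid X]

lemma riskM_le {Z : X} {x : Fin N → ℝ} (hx : x ∈ P) (hZx : Z + V₁ x ∈ A) :
    riskM A P V₀ V₁ Z ≤ V₀ x :=
  sInf_le ⟨x, ⟨hx, hZx⟩, rfl⟩

lemma exists_mem_of_riskM_ne_top {Z : X} (h : riskM A P V₀ V₁ Z ≠ ⊤) :
    ∃ x ∈ P, Z + V₁ x ∈ A := by
  by_contra! hempty
  refine h (sInf_eq_top.mpr ?_)
  rintro _ ⟨x, ⟨hx, hZx⟩, rfl⟩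
  exact absurd hZx (hempty x hx)

end AddCommMonoid

variable [AddCommGroup X] [Module ℝ X] [TopologicalSpace X]

lemma sigmaA_add_sigmaPV_sub_le_riskM (ψ : X →L[ℝ] ℝ) (Z : X) :
    sigmaA A ψ + sigmaPV P V₀ V₁ ψ - ((ψ Z : ℝ) : EReal) ≤ riskM A P V₀ V₁ Z := by
  refine le_sInf ?_
  rintro _ ⟨x, ⟨hx, hZx⟩, rfl⟩
  calc sigmaA A ψ + sigmaPV P V₀ V₁ ψ - ((ψ Z : ℝ) : EReal)
      ≤ ((ψ (Z + V₁ x) : ℝ) : EReal) + ((V₀ x - ψ (V₁ x) : ℝ) : EReal) - ((ψ Z : ℝ) : EReal) :=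
        EReal.sub_le_sub (add_le_add (sInf_le ⟨_, hZx, rfl⟩) (sInf_le ⟨x, hx, rfl⟩)) le_rfl
    _ = ((V₀ x : ℝ) : EReal) := by
        rw [map_add]
        norm_cast
        ring

lemma mem_dualD_of_le_add {ψ : X →L[ℝ] ℝ} {c : ℝ}
    (h : (c : EReal) ≤ sigmaA A ψ + sigmaPV P V₀ V₁ ψ) : ψ ∈ dualD A P V₀ V₁ := by
  constructor <;> intro hbot <;> simp [hbot] at h

lemma le_sigmaA_add_sigmaPV_of_isAffineMinorant (hA : A.Nonempty) (hP : P.Nonempty)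
    {χ : X →L[ℝ] ℝ} {v : ℝ} (hmin : IsAffineMinorant (riskM A P V₀ V₁) χ v) :
    ((-v : ℝ) : EReal) ≤ sigmaA A (-χ) + sigmaPV P V₀ V₁ (-χ) := by
  refine EReal.le_sInf_add_sInf hA hP fun W hW x hx => ?_
  have h := hmin (W - V₁ x) (V₀ x) (riskM_le hx (by rwa [sub_add_cancel]))
  rw [← EReal.coe_add, EReal.coe_le_coe_iff]
  simp only [neg_apply, map_sub] at h ⊢
  linarith

variable [IsTopologicalAddGroup X] [ContinuousSMul ℝ X] [LocallyConvexSpace ℝ X]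

lemma exists_mem_dualD_lt {Z₁ : X} (hZ₁top : riskM A P V₀ V₁ Z₁ ≠ ⊤)
    (hZ₁bot : riskM A P V₀ V₁ Z₁ ≠ ⊥) (hlsc : LowerSemicontinuous (riskM A P V₀ V₁))
    (hcv : Convex ℝ {p : X × ℝ | riskM A P V₀ V₁ p.1 ≤ p.2}) {Z : X} {r : ℝ}
    (hr : (r : EReal) < riskM A P V₀ V₁ Z) :
    ∃ ψ ∈ dualD A P V₀ V₁, (r : EReal) < sigmaA A ψ + sigmaPV P V₀ V₁ ψ - ((ψ Z : ℝ) : EReal) := by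
  obtain ⟨x₁, hx₁, hZx₁⟩ := exists_mem_of_riskM_ne_top hZ₁top
  obtain ⟨χ, v, hmin, hrv⟩ := exists_affineMinorant_gt hlsc hcv hZ₁top hZ₁bot hr
  have hσ := le_sigmaA_add_sigmaPV_of_isAffineMinorant ⟨_, hZx₁⟩ ⟨x₁, hx₁⟩ hmin
  refine ⟨-χ, mem_dualD_of_le_add hσ, ?_⟩
  calc (r : EReal) < ((-v - (-χ) Z : ℝ) : EReal) := by
        rw [EReal.coe_lt_coe_iff, neg_apply]
        linarith
    _ ≤ _ := by
        rw [EReal.coe_sub]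
        exact EReal.sub_le_sub hσ le_rfl

end RiskMeasure

theorem stmt3_general
    {X : Type*} [AddCommGroup X] [Module ℝ X] [TopologicalSpace X]
    [IsTopologicalAddGroup X] [ContinuousSMul ℝ X]
    [LocallyConvexSpace ℝ X]
    {N : ℕ}
    (P : Set (Fin N → ℝ))
    (V₀ : (Fin N → ℝ) → ℝ)
    (V₁ : (Fin N → ℝ) → X)
    (A : Set X)
    (hproper_bot : ∀ Z : X, riskM A P V₀ V₁ Z ≠ ⊥)
    (hproper_top : ∃ Z : X, riskM A P V₀ V₁ Z ≠ ⊤)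
    (hconv : ∀ l : ℝ, 0 ≤ l → l ≤ 1 → ∀ Z W : X,
      riskM A P V₀ V₁ (l • Z + (1 - l) • W) ≤
        (l : EReal) * riskM A P V₀ V₁ Z + ((1 - l : ℝ) : EReal) * riskM A P V₀ V₁ W)
    (hlsc : LowerSemicontinuous (riskM A P V₀ V₁)) :
    (dualD A P V₀ V₁).Nonempty ∧
    ∀ Z : X, riskM A P V₀ V₁ Z =
      ⨆ ψ ∈ dualD A P V₀ V₁,
        (sigmaA A ψ + sigmaPV P V₀ V₁ ψ - ((ψ Z : ℝ) : EReal)) := by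
  obtain ⟨Z₁, hZ₁⟩ := hproper_top
  have hZ₁bot := hproper_bot Z₁
  have hcv := convex_epigraph_of_le_combination hconv
  obtain ⟨r₁, -, hr₁⟩ := EReal.exists_between_coe_real (bot_lt_iff_ne_bot.mpr hZ₁bot)
  refine ⟨(exists_mem_dualD_lt hZ₁ hZ₁bot hlsc hcv hr₁).imp fun _ h => h.1,
    fun Z => le_antisymm ?_ ?_⟩
  · refine EReal.ge_of_forall_gt_iff_ge.mp fun r hr => ?_
    obtain ⟨ψ, hψ, hrψ⟩ := exists_mem_dualD_lt hZ₁ hZ₁bot hlsc hcv hr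
    exact hrψ.le.trans (le_iSup₂_of_le ψ hψ le_rfl)
  · exact iSup₂_le fun ψ _ => sigmaA_add_sigmaPV_sub_le_riskM ψ Z

theorem stmt3
    {X : Type*} [AddCommGroup X] [Module ℝ X] [TopologicalSpace X]
    [IsTopologicalAddGroup X] [ContinuousSMul ℝ X]
    [LocallyConvexSpace ℝ X] [T2Space X]
    (Xp : Set X) (hXp_cone : ∀ c : ℝ, 0 ≤ c → ∀ z ∈ Xp, c • z ∈ Xp)
    (hXp_conv : Convex ℝ Xp)
    {N : ℕ} (hN : 1 ≤ N)
    (P : Set (Fin N → ℝ)) (hP0 : (0 : Fin N → ℝ) ∈ P)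
    (V₀ : (Fin N → ℝ) → ℝ) (hV₀0 : V₀ 0 = 0) (hV₀sp : ∀ x, -V₀ (-x) ≤ V₀ x)
    (V₁ : (Fin N → ℝ) → X) (hV₁0 : V₁ 0 = 0) (hV₁sp : ∀ x, -V₁ (-x) - V₁ x ∈ Xp)
    (A : Set X) (hA0 : (0 : X) ∈ A) (hAmono : ∀ a ∈ A, ∀ p ∈ Xp, a + p ∈ A)
    (hproper_bot : ∀ Z : X, riskM A P V₀ V₁ Z ≠ ⊥)
    (hproper_top : ∃ Z : X, riskM A P V₀ V₁ Z ≠ ⊤)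
    (hconv : ∀ l : ℝ, 0 ≤ l → l ≤ 1 → ∀ Z W : X,
      riskM A P V₀ V₁ (l • Z + (1 - l) • W) ≤
        (l : EReal) * riskM A P V₀ V₁ Z + ((1 - l : ℝ) : EReal) * riskM A P V₀ V₁ W)
    (hlsc : LowerSemicontinuous (riskM A P V₀ V₁)) :
    (dualD A P V₀ V₁).Nonempty ∧
    ∀ Z : X, riskM A P V₀ V₁ Z =
      ⨆ ψ ∈ dualD A P V₀ V₁,
        (sigmaA A ψ + sigmaPV P V₀ V₁ ψ - ((ψ Z : ℝ) : EReal)) :=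
  stmt3_general P V₀ V₁ A hproper_bot hproper_top hconv hlsc
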